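/- arXiv:2305.04767 — 4 statements merged into one kernel-verified Lean document; each statement's English description precedes it below -/
import Mathlib

section
/- Let S be a colorful graph. For F ⊆ E(S), let S_F denote the colorful graph with vertex set V(S) (with identity coloring) and edge set F. Then for every colored graph H on color set V(S): the alternating sum Σ_{F ⊆ E(S)} (−1)^{|E(S)| − |F|} · hom(H, S_F) equals 1 if H is surjectively S-colored, and equals 0 otherwise. -/
open SimpleGraph

/-- Color-preserving homomorphism count between colored graphs. -/
noncomputable def cpHomCount {VH VG C : Type} (H : SimpleGraph VH) (cH : VH → C)
    (G : SimpleGraph VG) (cG : VG → C) : ℕ :=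
  Nat.card {f : H →g G // ∀ v, cG (f v) = cH v}

open Classical in
lemma cpHomCount_id_eq {VH VG : Type} (H : SimpleGraph VH) (G : SimpleGraph VG)
    (cH : VH → VG) :
    cpHomCount H cH G id = if ∀ u v, H.Adj u v → G.Adj (cH u) (cH v) then 1 else 0 := by
  unfold cpHomCount
  split_ifs with h
  · rw [Nat.card_eq_one_iff_unique]
    refine ⟨⟨fun f g => ?_⟩, ⟨⟨⟨cH, fun hadj => h _ _ hadj⟩, fun v => rfl⟩⟩⟩
    rcases f with ⟨f, hf⟩; rcases g with ⟨g, hg⟩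
    have : f = g := by
      ext v
      have h1 := hf v; have h2 := hg v
      simp only [id_eq] at h1 h2
      rw [h1, h2]
    simp [this]
  · have : IsEmpty {f : H →g G // ∀ v, id (f v) = cH v} := by
      constructor
      rintro ⟨f, hf⟩
      apply h
      intro u v huv
      have h1 := hf u; have h2 := hf v
      simp only [id_eq] at h1 h2
      rw [← h1, ← h2]
      exact f.map_rel' huv
    exact Nat.card_eq_zero.mpr (Or.inl this)

lemma alt_sum_indicator {α : Type} [DecidableEq α] (s t : Finset α) :
    ∑ F ∈ s.powerset, (-1 : ℤ) ^ (s.card - F.card) * (if t ⊆ F then 1 else 0)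
      = if t = s then 1 else 0 := by
  by_cases hts : t ⊆ s
  · simp_rw [mul_ite, mul_one, mul_zero]
    rw [Finset.sum_ite, Finset.sum_const_zero, add_zero]
    have step1 :
        ∑ F ∈ s.powerset.filter (fun F => t ⊆ F), (-1 : ℤ) ^ (s.card - F.card)
          = ∑ G ∈ (s \ t).powerset, (-1 : ℤ) ^ ((s \ t).card - G.card) := by
      refine Finset.sum_nbij' (i := fun F => F \ t) (j := fun G => G ∪ t) ?_ ?_ ?_ ?_ ?_
      · intro F hF
        simp only [Finset.mem_filter, Finset.mem_powerset] at hF ⊢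
        exact Finset.sdiff_subset_sdiff hF.1 le_rfl
      · intro G hG
        simp only [Finset.mem_powerset] at hG
        simp only [Finset.mem_filter, Finset.mem_powerset]
        exact ⟨Finset.union_subset (hG.trans Finset.sdiff_subset) hts,
          Finset.subset_union_right⟩
      · intro F hF
        simp only [Finset.mem_filter, Finset.mem_powerset] at hF
        show (F \ t) ∪ t = F
        exact Finset.sdiff_union_of_subset hF.2
      · intro G hG
        simp only [Finset.mem_powerset] at hG
        have hdisj : Disjoint G t :=
          Finset.disjoint_left.mpr fun a haG hat => (Finset.mem_sdiff.mp (hG haG)).2 hat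
        show (G ∪ t) \ t = G
        rw [Finset.union_sdiff_distrib, Finset.sdiff_self, Finset.union_empty,
          Finset.sdiff_eq_self_of_disjoint hdisj]
      · intro F hF
        simp only [Finset.mem_filter, Finset.mem_powerset] at hF
        congr 1
        have h1 : t.card ≤ F.card := Finset.card_le_card hF.2
        have h2 : F.card ≤ s.card := Finset.card_le_card hF.1
        have h3 : t.card ≤ s.card := Finset.card_le_card hts
        rw [Finset.card_sdiff_of_subset hF.2, Finset.card_sdiff_of_subset hts]
        omega
    have step2 :
        ∑ G ∈ (s \ t).powerset, (-1 : ℤ) ^ ((s \ t).card - G.card)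
          = ∑ G ∈ (s \ t).powerset, (-1 : ℤ) ^ G.card := by
      set d := s \ t with hd
      refine Finset.sum_nbij' (i := fun G => d \ G) (j := fun G => d \ G) ?_ ?_ ?_ ?_ ?_
      · intro G hG; simp
      · intro G hG; simp
      · intro G hG
        simp only [Finset.mem_powerset] at hG
        show d \ (d \ G) = G
        exact Finset.sdiff_sdiff_eq_self hG
      · intro G hG
        simp only [Finset.mem_powerset] at hG
        show d \ (d \ G) = G
        exact Finset.sdiff_sdiff_eq_self hG
      · intro G hG
        simp only [Finset.mem_powerset] at hG
        congr 1
        rw [Finset.card_sdiff_of_subset hG]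
    rw [step1, step2, Finset.sum_powerset_neg_one_pow_card]
    have : t = s ↔ s \ t = ∅ := by
      constructor
      · rintro rfl; simp
      · intro h
        exact Finset.Subset.antisymm hts (Finset.sdiff_eq_empty_iff_subset.mp h)
    by_cases he : s \ t = ∅ <;> simp [he, this]
  · have hne : t ≠ s := by rintro rfl; exact hts le_rfl
    rw [if_neg hne]
    apply Finset.sum_eq_zero
    intro F hF
    simp only [Finset.mem_powerset] at hF
    have : ¬ t ⊆ F := fun h => hts (h.trans hF)
    simp [this]

/-- Inclusion-exclusion filter for surjectively `S`-colored graphs: for a colorful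
graph `S` and a colored graph `H` on color set `V(S)`, the alternating sum over all
edge-subgraphs `S_F` of `S` (with identity colorings) of
`(−1)^{|E(S)|−|F|} · hom(H, S_F)` equals `1` if `H` is surjectively `S`-colored and
`0` otherwise. -/
theorem inclusion_exclusion_color_surjectivity_filter
    {VS VH : Type} [Fintype VS] [DecidableEq VS] [Fintype VH]
    (S : SimpleGraph VS) [DecidableRel S.Adj]
    (H : SimpleGraph VH) (cH : VH → VS) :
    (((∀ u v, H.Adj u v → S.Adj (cH u) (cH v)) ∧
        (∀ i j, S.Adj i j → ∃ u v, H.Adj u v ∧ cH u = i ∧ cH v = j)) →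
      ∑ F ∈ S.edgeFinset.powerset,
        (-1 : ℤ) ^ (S.edgeFinset.card - F.card) *
          cpHomCount H cH (SimpleGraph.fromEdgeSet (↑F : Set (Sym2 VS))) id = 1) ∧
    (¬ ((∀ u v, H.Adj u v → S.Adj (cH u) (cH v)) ∧
        (∀ i j, S.Adj i j → ∃ u v, H.Adj u v ∧ cH u = i ∧ cH v = j)) →
      ∑ F ∈ S.edgeFinset.powerset,
        (-1 : ℤ) ^ (S.edgeFinset.card - F.card) *
          cpHomCount H cH (SimpleGraph.fromEdgeSet (↑F : Set (Sym2 VS))) id = 0) := by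
  classical
  -- rewrite each summand as an indicator
  have hcnt : ∀ F : Finset (Sym2 VS),
      (cpHomCount H cH (SimpleGraph.fromEdgeSet (↑F : Set (Sym2 VS))) id : ℤ)
        = if ∀ u v, H.Adj u v → s(cH u, cH v) ∈ F ∧ cH u ≠ cH v then 1 else 0 := by
    intro F
    rw [cpHomCount_id_eq]
    push_cast
    refine if_congr ?_ rfl rfl
    simp only [SimpleGraph.fromEdgeSet_adj, Finset.mem_coe]
  by_cases hloop : ∀ u v, H.Adj u v → cH u ≠ cH v
  · -- no loop case: indicator is `T ⊆ F` with `T` the image of the edges of `H`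
    set T : Finset (Sym2 VS) :=
      Finset.univ.filter (fun e => ∃ u v, H.Adj u v ∧ e = s(cH u, cH v)) with hT
    have hind : ∀ F : Finset (Sym2 VS),
        (∀ u v, H.Adj u v → s(cH u, cH v) ∈ F ∧ cH u ≠ cH v) ↔ T ⊆ F := by
      intro F
      constructor
      · intro h e he
        simp only [hT, Finset.mem_filter, Finset.mem_univ, true_and] at he
        obtain ⟨u, v, huv, rfl⟩ := he
        exact (h u v huv).1
      · intro h u v huv
        refine ⟨h ?_, hloop u v huv⟩
        simp only [hT, Finset.mem_filter, Finset.mem_univ, true_and]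
        exact ⟨u, v, huv, rfl⟩
    have hsum :
        ∑ F ∈ S.edgeFinset.powerset,
          (-1 : ℤ) ^ (S.edgeFinset.card - F.card) *
            cpHomCount H cH (SimpleGraph.fromEdgeSet (↑F : Set (Sym2 VS))) id
          = if T = S.edgeFinset then 1 else 0 := by
      rw [← alt_sum_indicator S.edgeFinset T]
      refine Finset.sum_congr rfl fun F _ => ?_
      rw [hcnt F, if_congr (hind F) rfl rfl]
    have hiff :
        ((∀ u v, H.Adj u v → S.Adj (cH u) (cH v)) ∧
          (∀ i j, S.Adj i j → ∃ u v, H.Adj u v ∧ cH u = i ∧ cH v = j))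
          ↔ T = S.edgeFinset := by
      constructor
      · rintro ⟨h1, h2⟩
        apply Finset.Subset.antisymm
        · intro e he
          simp only [hT, Finset.mem_filter, Finset.mem_univ, true_and] at he
          obtain ⟨u, v, huv, rfl⟩ := he
          rw [SimpleGraph.mem_edgeFinset, SimpleGraph.mem_edgeSet]
          exact h1 u v huv
        · intro e he
          induction e with
          | h i j =>
            rw [SimpleGraph.mem_edgeFinset, SimpleGraph.mem_edgeSet] at he
            obtain ⟨u, v, huv, hu, hv⟩ := h2 i j he
            simp only [hT, Finset.mem_filter, Finset.mem_univ, true_and]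
            exact ⟨u, v, huv, by rw [hu, hv]⟩
      · intro hTE
        constructor
        · intro u v huv
          have : s(cH u, cH v) ∈ T := by
            simp only [hT, Finset.mem_filter, Finset.mem_univ, true_and]
            exact ⟨u, v, huv, rfl⟩
          rw [hTE, SimpleGraph.mem_edgeFinset, SimpleGraph.mem_edgeSet] at this
          exact this
        · intro i j hij
          have : s(i, j) ∈ T := by
            rw [hTE, SimpleGraph.mem_edgeFinset, SimpleGraph.mem_edgeSet]
            exact hij
          simp only [hT, Finset.mem_filter, Finset.mem_univ, true_and] at this
          obtain ⟨u, v, huv, heq⟩ := this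
          rw [Sym2.eq_iff] at heq
          rcases heq with ⟨hi, hj⟩ | ⟨hi, hj⟩
          · exact ⟨u, v, huv, hi.symm, hj.symm⟩
          · exact ⟨v, u, huv.symm, hi.symm, hj.symm⟩
    constructor
    · intro hP
      rw [hsum, if_pos (hiff.mp hP)]
    · intro hP
      rw [hsum, if_neg (fun h => hP (hiff.mpr h))]
  · -- loop case: every summand is zero, and the hypothesis fails
    push_neg at hloop
    obtain ⟨u, v, huv, heq⟩ := hloop
    have hzero :
        ∑ F ∈ S.edgeFinset.powerset,
          (-1 : ℤ) ^ (S.edgeFinset.card - F.card) *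
            cpHomCount H cH (SimpleGraph.fromEdgeSet (↑F : Set (Sym2 VS))) id = 0 := by
      apply Finset.sum_eq_zero
      intro F _
      rw [hcnt F, if_neg, mul_zero]
      intro h
      exact (h u v huv).2 heq
    refine ⟨fun hP => absurd heq (hP.1 u v huv).ne, fun _ => hzero⟩
end

section
/- Let S be a connected colorful graph with n vertices and m edges. Then the number of color-preserving homomorphisms from S to the CFI graph Γ(S, χ_∅) with the all-zero charge equals 2^(m − n + 1). -/
open SimpleGraph

variable {V : Type} [Fintype V] [DecidableEq V]

/-- Vertices of the CFI graph over a colorful graph `S`: pairs of a color `v ∈ V(S)`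
and an even assignment on the edges incident to `v` (encoded as a function on all of
`Sym2 V` supported on the incidence set of `v`). -/
def CFIVert (S : SimpleGraph V) : Type :=
  Σ v : V, {a : Sym2 V → ZMod 2 //
    (∀ e, a e ≠ 0 → e ∈ S.incidenceSet v) ∧ ∑ e : Sym2 V, a e = 0}

/-- The CFI graph of a colorful graph `S` with charge function `c`: vertices
`(u, a_u)` and `(v, a_v)` are adjacent iff `uv ∈ E(S)` and
`a_u(uv) + a_v(uv) = c(uv)`.  Its coloring is `Sigma.fst : CFIVert S → V`. -/
def CFI (S : SimpleGraph V) (c : Sym2 V → ZMod 2) : SimpleGraph (CFIVert S) where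
  Adj x y := S.Adj x.1 y.1 ∧ x.2.1 s(x.1, y.1) + y.2.1 s(x.1, y.1) = c s(x.1, y.1)
  symm := by
    constructor
    rintro ⟨u, a⟩ ⟨v, b⟩ ⟨hadj, hsum⟩
    refine ⟨hadj.symm, ?_⟩
    simp only [Sym2.eq_swap (a := v) (b := u)]
    rw [add_comm]; exact hsum
  loopless := ⟨fun x h => S.irrefl h.1⟩

/-! A colour-preserving homomorphism `S → Γ(S, 0)` chooses at each vertex `v` an even assignment
`a_v` on `I(v)`, and adjacency under the zero charge forces `a_u(uv) = a_v(uv)`. So it is the same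
thing as an edge labelling `b : E(S) → 𝔽₂` with zero sum at every vertex, i.e. a mod-2 cycle of `S`.
The unsigned boundary map `𝔽₂^E → 𝔽₂^V` of a connected graph has as image the vectors with zero
coordinate sum, which has dimension `n - 1`, so the cycle space has dimension `m - n + 1`. -/

def augmentation (K ι : Type*) [CommRing K] [Fintype ι] : (ι → K) →ₗ[K] K :=
  ∑ i, LinearMap.proj i

lemma augmentation_apply {K ι : Type*} [CommRing K] [Fintype ι] (g : ι → K) :
    augmentation K ι g = ∑ i, g i := by
  simp [augmentation]

lemma finrank_ker_augmentation (K ι : Type*) [Field K] [Fintype ι] [Nonempty ι] :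
    Module.finrank K (LinearMap.ker (augmentation K ι)) = Fintype.card ι - 1 := by
  classical
  have hsurj : Function.Surjective (augmentation K ι) := fun z => by
    obtain ⟨i⟩ := ‹Nonempty ι›
    exact ⟨Pi.single i z, by simp [augmentation_apply]⟩
  have := LinearMap.finrank_range_add_finrank_ker (augmentation K ι)
  rw [LinearMap.range_eq_top_of_surjective _ hsurj, finrank_top, Module.finrank_self,
    Module.finrank_fintype_fun_eq_card] at this
  omega

namespace SimpleGraph

variable {α : Type*} [DecidableEq α] (G : SimpleGraph α) [DecidableRel G.Adj]
  (K : Type*) [CommRing K]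

/-- The CFI label `a_v` determined by an edge labelling `b`: its restriction to `I(v)`, extended
by zero to all of `Sym2 α` as in `CFIVert`. -/
def restrictIncidence (b : G.edgeSet → K) (v : α) (e : Sym2 α) : K :=
  if h : e ∈ G.edgeSet then G.incMatrix K v e * b ⟨e, h⟩ else 0

variable {G K}

lemma restrictIncidence_of_mem {b : G.edgeSet → K} {v : α} {e : Sym2 α} (he : e ∈ G.edgeSet)
    (hv : v ∈ e) : G.restrictIncidence K b v e = b ⟨e, he⟩ := by
  rw [restrictIncidence, dif_pos he, incMatrix_of_mem_incidenceSet _ ⟨he, hv⟩, one_mul]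

lemma mem_incidenceSet_of_restrictIncidence_ne_zero {b : G.edgeSet → K} {v : α} {e : Sym2 α}
    (h : G.restrictIncidence K b v e ≠ 0) : e ∈ G.incidenceSet v := by
  by_contra hv
  refine h ?_
  rw [restrictIncidence]
  split_ifs <;> simp [incMatrix_of_notMem_incidenceSet _ hv]

variable (G K) [Fintype α]

def boundary : (G.edgeSet → K) →ₗ[K] α → K :=
  ((G.incMatrix K).submatrix id Subtype.val).mulVecLin

abbrev cycleSpace : Submodule K (G.edgeSet → K) := LinearMap.ker (G.boundary K)

variable {G K}

lemma boundary_apply (b : G.edgeSet → K) (v : α) :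
    G.boundary K b v = ∑ e : G.edgeSet, G.incMatrix K v e * b e := rfl

lemma sum_restrictIncidence (b : G.edgeSet → K) (v : α) :
    ∑ e, G.restrictIncidence K b v e = G.boundary K b v := by
  have h₀ : ∑ e : {e // e ∉ G.edgeSet}, G.restrictIncidence K b v e = 0 :=
    Finset.sum_eq_zero fun e _ => dif_neg e.2
  rw [← Fintype.sum_subtype_add_sum_subtype (· ∈ G.edgeSet), h₀, add_zero]
  exact Finset.sum_congr rfl fun e _ => dif_pos e.2

variable (G K) [CharP K 2]

lemma range_boundary_le : LinearMap.range (G.boundary K) ≤ LinearMap.ker (augmentation K α) := by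
  rintro _ ⟨b, rfl⟩
  rw [LinearMap.mem_ker, augmentation_apply]
  simp only [boundary_apply]
  rw [Finset.sum_comm]
  refine Finset.sum_eq_zero fun e _ => ?_
  rw [← Finset.sum_mul, G.sum_incMatrix_apply_of_mem_edgeSet e.2, CharTwo.two_eq_zero, zero_mul]

lemma boundary_single_edge {u w : α} (h : G.Adj u w) :
    G.boundary K (Pi.single ⟨s(u, w), h⟩ 1) = Pi.single u 1 - Pi.single w 1 := by
  funext v
  rw [boundary, Matrix.mulVecLin_apply, Matrix.mulVec_single_one, Pi.sub_apply,
    CharTwo.sub_eq_add]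
  by_cases hu : v = u <;> by_cases hw : v = w <;>
    simp_all [incMatrix_apply', mk'_mem_incidenceSet_iff, h.ne']

lemma single_sub_single_mem_range_boundary {u w : α} (h : G.Reachable u w) :
    Pi.single u 1 - Pi.single w 1 ∈ LinearMap.range (G.boundary K) := by
  obtain ⟨p⟩ := h
  induction p with
  | nil => rw [sub_self]; exact Submodule.zero_mem _
  | cons h _ ih =>
    rw [← sub_add_sub_cancel]
    exact Submodule.add_mem _ ⟨_, G.boundary_single_edge K h⟩ ih

lemma range_boundary (hG : G.Connected) :
    LinearMap.range (G.boundary K) = LinearMap.ker (augmentation K α) := by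
  refine le_antisymm (G.range_boundary_le K) fun g hg => ?_
  obtain ⟨v₀⟩ := hG.nonempty
  have hsum : ∑ v, g v = 0 := by rwa [LinearMap.mem_ker, augmentation_apply] at hg
  have hg : g = ∑ v, g v • (Pi.single v 1 - Pi.single v₀ 1) := by
    simp only [smul_sub, Finset.sum_sub_distrib, ← Finset.sum_smul, hsum, zero_smul, sub_zero]
    simp [← Pi.single_smul', LinearMap.sum_single_apply]
  rw [hg]
  exact Submodule.sum_mem _ fun v _ =>
    Submodule.smul_mem _ _ (G.single_sub_single_mem_range_boundary K (hG.preconnected v v₀))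

lemma finrank_cycleSpace (K : Type*) [Field K] [CharP K 2] (hG : G.Connected) :
    Module.finrank K (G.cycleSpace K) = G.edgeFinset.card + 1 - Fintype.card α := by
  show Module.finrank K (LinearMap.ker (G.boundary K)) = _
  have : Nonempty α := hG.nonempty
  have := LinearMap.finrank_range_add_finrank_ker (G.boundary K)
  rw [G.range_boundary K hG, finrank_ker_augmentation, Module.finrank_fintype_fun_eq_card,
    ← edgeFinset_card] at this
  have := Fintype.card_pos (α := α)
  omega

end SimpleGraph

namespace CFIVert

variable {α : Type} [Fintype α] {S : SimpleGraph α}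

lemma apply_eq_zero_of_notMem (x : CFIVert S) {e : Sym2 α} (he : e ∉ S.incidenceSet x.1) :
    x.2.1 e = 0 :=
  of_not_not (mt (x.2.2.1 e) he)

lemma ext {x y : CFIVert S} (h₁ : x.1 = y.1) (h₂ : x.2.1 = y.2.1) : x = y := by
  obtain ⟨u, a, ha⟩ := x
  obtain ⟨w, a', ha'⟩ := y
  obtain rfl : u = w := h₁
  obtain rfl : a = a' := h₂
  rfl

end CFIVert

namespace CFI

variable {α : Type} [Fintype α] {S : SimpleGraph α}

lemma hom_apply_eq_of_adj {f : S →g CFI S (fun _ => 0)} (hf : ∀ v, (f v).1 = v) {u w : α}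
    (h : S.Adj u w) : (f u).2.1 s(u, w) = (f w).2.1 s(u, w) := by
  have hsum := (f.map_rel h).2
  have hs : s((f u).1, (f w).1) = s(u, w) := by rw [hf u, hf w]
  rwa [hs, CharTwo.add_eq_zero] at hsum

lemma hom_apply_eq_of_mem {f : S →g CFI S (fun _ => 0)} (hf : ∀ v, (f v).1 = v) {u w : α}
    {e : Sym2 α} (he : e ∈ S.edgeSet) (hu : u ∈ e) (hw : w ∈ e) :
    (f u).2.1 e = (f w).2.1 e := by
  by_cases huw : u = w
  · rw [huw]
  · obtain rfl := (Sym2.mem_and_mem_iff huw).mp ⟨hu, hw⟩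
    exact hom_apply_eq_of_adj hf he

/-- Read at an arbitrary endpoint of `e`; by `hom_apply_eq_of_mem` the choice does not matter. -/
noncomputable def edgeValue (f : S →g CFI S (fun _ => 0)) (e : S.edgeSet) : ZMod 2 :=
  (f (e : Sym2 α).out.1).2.1 e

variable [DecidableEq α] [DecidableRel S.Adj]

lemma hom_apply_eq_restrictIncidence {f : S →g CFI S (fun _ => 0)} (hf : ∀ v, (f v).1 = v)
    (v : α) : (f v).2.1 = S.restrictIncidence (ZMod 2) (edgeValue f) v := by
  funext e
  by_cases hv : e ∈ S.incidenceSet v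
  · rw [restrictIncidence_of_mem hv.1 hv.2, edgeValue]
    exact hom_apply_eq_of_mem hf hv.1 hv.2 (Sym2.out_fst_mem e)
  · rw [(f v).apply_eq_zero_of_notMem (by rwa [hf v]), eq_comm]
    exact of_not_not (mt mem_incidenceSet_of_restrictIncidence_ne_zero hv)

noncomputable def homOfCycle (b : S.cycleSpace (ZMod 2)) : S →g CFI S (fun _ => 0) where
  toFun v := ⟨v, S.restrictIncidence _ b v,
    fun _ => mem_incidenceSet_of_restrictIncidence_ne_zero,
    by rw [sum_restrictIncidence]; exact congrFun (LinearMap.mem_ker.mp b.2) v⟩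
  map_rel' {u w} h := by
    refine ⟨h, ?_⟩
    change S.restrictIncidence (ZMod 2) b u s(u, w) +
      S.restrictIncidence (ZMod 2) b w s(u, w) = 0
    rw [restrictIncidence_of_mem h (Sym2.mem_mk_left u w),
      restrictIncidence_of_mem h (Sym2.mem_mk_right u w), CharTwo.add_self_eq_zero]

noncomputable def homEquivCycleSpace :
    {f : S →g CFI S (fun _ => 0) // ∀ v, (f v).1 = v} ≃ S.cycleSpace (ZMod 2) where
  toFun f := ⟨edgeValue f.1, LinearMap.mem_ker.mpr <| funext fun v => by
    rw [Pi.zero_apply, ← sum_restrictIncidence, ← hom_apply_eq_restrictIncidence f.2]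
    exact (f.1 v).2.2.2⟩
  invFun b := ⟨homOfCycle b, fun _ => rfl⟩
  left_inv f := Subtype.ext <| RelHom.ext fun v =>
    CFIVert.ext (f.2 v).symm (hom_apply_eq_restrictIncidence f.2 v).symm
  right_inv b := Subtype.ext <| funext fun e => restrictIncidence_of_mem e.2 (Sym2.out_fst_mem _)

end CFI

/-- For a connected colorful graph `S` with `n` vertices and `m` edges, the number of
color-preserving homomorphisms from `S` into the CFI graph `Γ(S, χ_∅)` with the
all-zero charge equals `2^(m − n + 1)`. -/
theorem cpHomCount_CFI_zero_charge
    (S : SimpleGraph V) [DecidableRel S.Adj] (hconn : S.Connected) :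
    cpHomCount S id (CFI S (fun _ => 0)) Sigma.fst =
      2 ^ (S.edgeFinset.card + 1 - Fintype.card V) :=
  calc cpHomCount S id (CFI S (fun _ => 0)) Sigma.fst
      = Nat.card (S.cycleSpace (ZMod 2)) := Nat.card_congr CFI.homEquivCycleSpace
    _ = 2 ^ (S.edgeFinset.card + 1 - Fintype.card V) := by
      rw [Module.natCard_eq_pow_finrank (K := ZMod 2), Nat.card_zmod,
        S.finrank_cycleSpace (ZMod 2) hconn]
end

section
/- Let S be a colorful graph, let c : E(S) → ZMod 2 be any charge function, and let vu, vw ∈ E(S) be two edges sharing the common endpoint v. Then there is a color-preserving isomorphism between the CFI graphs Γ(S, c) and Γ(S, c ⊕ χ_{vu} ⊕ χ_{vw}), where ⊕ denotes pointwise addition in ZMod 2. -/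
open SimpleGraph

variable {V : Type} [Fintype V] [DecidableEq V]

/-!
Adding an even assignment `δ` at `v` to the labels of all vertices of color `v` changes
`a_x(xy) + a_y(xy)` on every edge `xy` by exactly `δ(xy)`: only one endpoint has color `v`,
and `δ` vanishes on the edges not at `v`. It is therefore a color-preserving isomorphism
`Γ(S, c) ≅ Γ(S, c + δ)`, and `χ_{vu} + χ_{vw}` is such an even assignment at `v`.
-/

namespace CFI

/-- The labels of the vertices of color `v` in `CFI S c`, as a group. -/
def evenAssignments (S : SimpleGraph V) (v : V) : AddSubgroup (Sym2 V → ZMod 2) where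
  carrier := {a | (∀ e, a e ≠ 0 → e ∈ S.incidenceSet v) ∧ ∑ e : Sym2 V, a e = 0}
  zero_mem' := ⟨fun _ h => absurd rfl h, Finset.sum_const_zero⟩
  add_mem' := by
    rintro a b ⟨ha, hsa⟩ ⟨hb, hsb⟩
    refine ⟨fun e he => ?_, by simp [Finset.sum_add_distrib, hsa, hsb]⟩
    by_cases hae : a e = 0
    · exact hb e (by simpa [hae] using he)
    · exact ha e hae
  neg_mem' := by
    rintro a ⟨ha, hsa⟩
    exact ⟨fun e he => ha e (by simpa using he), by simp [hsa]⟩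

variable {S : SimpleGraph V} {v : V} {δ : Sym2 V → ZMod 2}

lemma indicator_add_indicator_mem_evenAssignments {u w : V} (hvu : S.Adj v u)
    (hvw : S.Adj v w) :
    (fun e => (if e = s(v, u) then 1 else 0) + (if e = s(v, w) then 1 else 0) : Sym2 V → ZMod 2)
      ∈ evenAssignments S v := by
  refine ⟨fun e he => ?_, ?_⟩
  · by_cases hu : e = s(v, u)
    · exact hu ▸ S.mk'_mem_incidenceSet_left_iff.2 hvu
    by_cases hw : e = s(v, w)
    · exact hw ▸ S.mk'_mem_incidenceSet_left_iff.2 hvw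
    · simp [hu, hw] at he
  · simp only [Finset.sum_add_distrib, Finset.sum_ite_eq', Finset.mem_univ, if_true]
    decide

/-- At most one endpoint of an edge is `v`, and `δ` vanishes on edges avoiding `v`. -/
lemma ite_add_ite_of_adj (hδ : δ ∈ evenAssignments S v) {x y : V} (hxy : S.Adj x y) :
    ((if x = v then δ s(x, y) else 0) + if y = v then δ s(x, y) else 0) = δ s(x, y) := by
  by_cases hx : x = v
  · subst hx
    simp [hxy.ne.symm]
  by_cases hy : y = v
  · simp [hx, hy]
  have : δ s(x, y) = 0 := by
    by_contra h
    rcases Sym2.mem_iff.1 (hδ.1 _ h).2 with h' | h'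
    exacts [hx h'.symm, hy h'.symm]
  simp [hx, hy, this]

def twist (hδ : δ ∈ evenAssignments S v) (x : CFIVert S) : CFIVert S :=
  ⟨x.1, x.2.1 + (if x.1 = v then δ else 0), by
    have hx : x.2.1 ∈ evenAssignments S x.1 := x.2.2
    split_ifs with h
    · exact add_mem hx (h ▸ hδ)
    · rwa [add_zero]⟩

lemma twist_fst (hδ : δ ∈ evenAssignments S v) (x : CFIVert S) : (twist hδ x).1 = x.1 := rfl

lemma twist_apply (hδ : δ ∈ evenAssignments S v) (x : CFIVert S) (e : Sym2 V) :
    (twist hδ x).2.1 e = x.2.1 e + if x.1 = v then δ e else 0 := by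
  simp [twist, apply_ite (fun f : Sym2 V → ZMod 2 => f e)]

lemma twist_involutive (hδ : δ ∈ evenAssignments S v) : Function.Involutive (twist hδ) := by
  intro x
  refine Sigma.ext rfl (heq_of_eq (Subtype.ext (funext fun e => ?_)))
  rw [twist_apply, twist_apply, twist_fst]
  exact CharTwo.add_cancel_right _ _

lemma twist_adj_twist_iff (hδ : δ ∈ evenAssignments S v) (c : Sym2 V → ZMod 2)
    {x y : CFIVert S} : (CFI S (c + δ)).Adj (twist hδ x) (twist hδ y) ↔ (CFI S c).Adj x y := by
  simp only [CFI, twist_fst, twist_apply, Pi.add_apply]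
  refine and_congr_right fun hxy => ?_
  have h := ite_add_ite_of_adj hδ hxy
  constructor <;> intro h'
  · linear_combination h' - h
  · linear_combination h' + h

def twistIso (hδ : δ ∈ evenAssignments S v) (c : Sym2 V → ZMod 2) :
    CFI S c ≃g CFI S (c + δ) where
  toEquiv := (twist_involutive hδ).toPerm
  map_rel_iff' := twist_adj_twist_iff hδ c

end CFI

theorem CFI_iso_flip_incident_edges_general
    (S : SimpleGraph V) (c : Sym2 V → ZMod 2)
    (v u w : V) (hvu : S.Adj v u) (hvw : S.Adj v w) :
    ∃ φ : CFI S c ≃g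
        CFI S (fun e => c e + (if e = s(v, u) then 1 else 0) +
          (if e = s(v, w) then 1 else 0)),
      ∀ x : CFIVert S, (φ x).1 = x.1 := by
  have hδ := CFI.indicator_add_indicator_mem_evenAssignments hvu hvw
  have hc : (fun e => c e + (if e = s(v, u) then 1 else 0) + (if e = s(v, w) then 1 else 0)) =
      c + fun e => (if e = s(v, u) then 1 else 0) + (if e = s(v, w) then 1 else 0) :=
    funext fun e => add_assoc _ _ _
  rw [hc]
  exact ⟨CFI.twistIso hδ c, CFI.twist_fst hδ⟩

/-- Flipping the charge on two edges `vu, vw ∈ E(S)` incident to a common vertex `v`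
yields a color-isomorphic CFI graph: `Γ(S, c) ≅ Γ(S, c ⊕ χ_{vu} ⊕ χ_{vw})`, via an
isomorphism preserving the coloring `Sigma.fst`. -/
theorem CFI_iso_flip_incident_edges
    (S : SimpleGraph V) [DecidableRel S.Adj] (c : Sym2 V → ZMod 2)
    (v u w : V) (hvu : S.Adj v u) (hvw : S.Adj v w) :
    ∃ φ : CFI S c ≃g
        CFI S (fun e => c e + (if e = s(v, u) then 1 else 0) +
          (if e = s(v, w) then 1 else 0)),
      ∀ x : CFIVert S, (φ x).1 = x.1 :=
  CFI_iso_flip_incident_edges_general S c v u w hvu hvw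
end

section
/- Let r, s ∈ ℕ and let k = (k_1, …, k_r) ∈ ℕ^r with k_1 + … + k_r ≤ s. Then there exist rational coefficients β_a, indexed by tuples a = (a_1, …, a_r) ∈ {1, …, s+1}^r, such that for every tuple n = (n_1, …, n_r) ∈ ℕ^r with n_1 + … + n_r ≤ s: Σ_a β_a · Π_{i=1}^r a_i^{n_i} equals 1 if n = k and equals 0 otherwise. -/
/-!
Reading off the coefficient of `X^k` is a linear functional on polynomials of degree `< m`,
and Lagrange interpolation at `m` distinct nodes expresses it as a combination of point
evaluations: the weights are the `X^k`-coefficients of the Lagrange basis polynomials.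
Testing on `X^n` gives the one-variable statement; for `r` variables, the tensor product
of these weights on the grid `{1, …, s+1}^r` works, since both sides factor over the
coordinates.
-/

open Finset Polynomial

namespace Lagrange

variable {F ι : Type*} [Field F] [DecidableEq ι] {s : Finset ι} {v : ι → F}

theorem sum_coeff_basis_mul_pow (hvs : Set.InjOn v s) (k : ℕ) {n : ℕ} (hn : n < #s) :
    ∑ i ∈ s, (Lagrange.basis s v i).coeff k * v i ^ n = if n = k then 1 else 0 := by
  have hX : (X ^ n : F[X]) = interpolate s v fun i => v i ^ n := by
    simpa using eq_interpolate (f := (X ^ n : F[X])) hvs (by simpa using hn)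
  have := congrArg (coeff · k) hX
  simp only [coeff_X_pow, interpolate_apply, finsetSum_coeff, coeff_C_mul] at this
  simp only [← this, mul_comm, eq_comm]

theorem sum_piFinset_prod_coeff_basis_mul_pow {σ : Type*} [Fintype σ] [DecidableEq σ]
    (hvs : Set.InjOn v s) (k n : σ → ℕ) (hn : ∀ j, n j < #s) :
    ∑ a ∈ Fintype.piFinset (fun _ : σ => s),
        (∏ j, (Lagrange.basis s v (a j)).coeff (k j)) * ∏ j, v (a j) ^ n j =
      if n = k then 1 else 0 := by
  simp_rw [← prod_mul_distrib]
  rw [← prod_univ_sum (fun _ => s) fun j i => (Lagrange.basis s v i).coeff (k j) * v i ^ n j]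
  simp only [sum_coeff_basis_mul_pow hvs _ (hn _), Fintype.prod_boole, funext_iff]

end Lagrange

theorem interpolation_cardinality_filter_general (r s : ℕ) (k : Fin r → ℕ) :
    ∃ β : (Fin r → ℕ) → ℚ,
      ∀ n : Fin r → ℕ, ∑ i, n i ≤ s →
        (∑ a ∈ Fintype.piFinset (fun _ : Fin r => Finset.Icc 1 (s + 1)),
            β a * ∏ i, (a i : ℚ) ^ (n i)) =
          if n = k then 1 else 0 := by
  have hinj : Set.InjOn (Nat.cast : ℕ → ℚ) (Icc 1 (s + 1)) := Nat.cast_injective.injOn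
  refine ⟨fun a => ∏ i, (Lagrange.basis (Icc 1 (s + 1)) Nat.cast (a i)).coeff (k i),
    fun n hn => Lagrange.sum_piFinset_prod_coeff_basis_mul_pow hinj k n fun i => ?_⟩
  have := single_le_sum (fun j _ => Nat.zero_le (n j)) (mem_univ i)
  rw [Nat.card_Icc]
  omega

/-- Multivariate polynomial interpolation underlying cardinality filters: for all
`r, s ∈ ℕ` and every exponent tuple `k` of total degree at most `s`, there exist
rational coefficients `β_a`, indexed by tuples `a ∈ {1, …, s+1}^r`, such that for
every tuple `n` of total degree at most `s`, the combination
`Σ_a β_a · Π_i a_i^{n_i}` equals `1` if `n = k` and `0` otherwise. -/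
theorem interpolation_cardinality_filter (r s : ℕ) (k : Fin r → ℕ)
    (hk : ∑ i, k i ≤ s) :
    ∃ β : (Fin r → ℕ) → ℚ,
      ∀ n : Fin r → ℕ, ∑ i, n i ≤ s →
        (∑ a ∈ Fintype.piFinset (fun _ : Fin r => Finset.Icc 1 (s + 1)),
            β a * ∏ i, (a i : ℚ) ^ (n i)) =
          if n = k then 1 else 0 :=
  interpolation_cardinality_filter_general r s k
end
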